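/- Let n ≥ 0 be an integer and let f(x) = x^{2n}. Then there exist polynomials r₁, r₂ ∈ ℂ[z] of degree at most n−1 such that for all x ∈ ℂ with x ≠ 0, (M₁f)(x) = x^{2n} + r₁(x²) and (M₂f)(x) = (2n−1)·x^{2n} + r₂(x²). In particular M₁ and M₂ stabilize the space of polynomials of degree n in the grid variable λ_x = x². -/

import Mathlib

/-!
Since `(x ± 1)² = (x² + 1) ± 2x`, one has `(x ± 1)^(2n) = E_n(x²) ± 2x·O_n(x²)` for polynomials
`E_n, O_n` obeying a two-term recursion; `E_n` is monic of degree `n`, and `O_n` has degree `< n`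
with `X·O_n = n·Xⁿ + (lower terms)`. Substituting, `M₁f = (E_n − O_n)(x²)` and
`M₂f = ((2x² + 1)·O_n − E_n)(x²)`, whose leading terms are `x^(2n)` and `(2n − 1)·x^(2n)`.
-/

open Polynomial

namespace QuadraticGrid

section EvenOdd

variable (R : Type*) [CommRing R]

mutual
noncomputable def evenPart : ℕ → R[X]
  | 0 => 1
  | n + 1 => (X + 1) * evenPart n + 4 * X * oddPart n
noncomputable def oddPart : ℕ → R[X]
  | 0 => 0
  | n + 1 => evenPart n + (X + 1) * oddPart n
end

variable {R}

theorem add_one_pow_two_mul (x : R) (n : ℕ) :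
    (x + 1) ^ (2 * n) = (evenPart R n).eval (x ^ 2) + 2 * x * (oddPart R n).eval (x ^ 2) := by
  induction n with
  | zero => simp [evenPart, oddPart]
  | succ n ih =>
    simp only [evenPart, oddPart, eval_add, eval_mul, eval_X, eval_one, eval_ofNat]
    linear_combination (x + 1) ^ 2 * ih

theorem sub_one_pow_two_mul (x : R) (n : ℕ) :
    (x - 1) ^ (2 * n) = (evenPart R n).eval (x ^ 2) - 2 * x * (oddPart R n).eval (x ^ 2) := by
  have h := add_one_pow_two_mul (-x) n
  rw [neg_sq, neg_add_eq_sub, ← neg_sub, (even_two_mul n).neg_pow] at h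
  linear_combination h

theorem mul_mem_degreeLT_add {p q : R[X]} {m n : ℕ} (hp : p ∈ degreeLT R n) (hq : q.degree ≤ m) :
    q * p ∈ degreeLT R (n + m) := by
  rcases eq_or_ne q 0 with rfl | hq0
  · simp
  rw [mem_degreeLT] at hp ⊢
  refine (degree_mul_le _ _).trans_lt ?_
  rw [Nat.cast_add, add_comm (n : WithBot ℕ)]
  exact WithBot.add_lt_add_of_le_of_lt (degree_ne_bot.2 hq0) hq hp

theorem X_pow_mem_degreeLT_succ (n : ℕ) : (X ^ n : R[X]) ∈ degreeLT R (n + 1) :=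
  mem_degreeLT.2 <| (degree_X_pow_le n).trans_lt <| by exact_mod_cast n.lt_succ_self

theorem evenPart_sub_X_pow_mem_degreeLT_and_oddPart_mem_degreeLT (n : ℕ) :
    evenPart R n - X ^ n ∈ degreeLT R n ∧ oddPart R n ∈ degreeLT R n := by
  induction n with
  | zero => simp [evenPart, oddPart]
  | succ n ih =>
    obtain ⟨hE, hO⟩ := ih
    have hdeg : (X + 1 : R[X]).degree ≤ 1 := by compute_degree
    have hdeg' : (4 * X : R[X]).degree ≤ 1 := by compute_degree
    have hX := X_pow_mem_degreeLT_succ (R := R) n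
    have hE' : evenPart R (n + 1) - X ^ (n + 1)
        = (X + 1) * (evenPart R n - X ^ n) + X ^ n + 4 * X * oddPart R n := by
      rw [evenPart]; ring
    have hO' : oddPart R (n + 1) = (evenPart R n - X ^ n) + X ^ n + (X + 1) * oddPart R n := by
      rw [oddPart]; ring
    rw [hE', hO']
    exact ⟨add_mem (add_mem (mul_mem_degreeLT_add hE hdeg) hX) (mul_mem_degreeLT_add hO hdeg'),
      add_mem (add_mem (degreeLT_mono n.le_succ hE) hX) (mul_mem_degreeLT_add hO hdeg)⟩

theorem X_mul_oddPart_sub_mem_degreeLT (n : ℕ) :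
    X * oddPart R n - n • X ^ n ∈ degreeLT R n := by
  induction n with
  | zero => simp [oddPart]
  | succ n ih =>
    have hE := (evenPart_sub_X_pow_mem_degreeLT_and_oddPart_mem_degreeLT (R := R) n).1
    have hdeg : (X + 1 : R[X]).degree ≤ 1 := by compute_degree
    have h : X * oddPart R (n + 1) - (n + 1) • X ^ (n + 1)
        = X * (evenPart R n - X ^ n) + (X + 1) * (X * oddPart R n - n • X ^ n) + n • X ^ n := by
      rw [oddPart]; ring
    rw [h]
    exact add_mem (add_mem (mul_mem_degreeLT_add hE degree_X_le) (mul_mem_degreeLT_add ih hdeg))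
      (nsmul_mem (X_pow_mem_degreeLT_succ n) n)

end EvenOdd

section Operators

variable {K : Type*} [Field K]

def M₁ (f : K → K) (x : K) : K :=
  ((2 * x - 1) * f (x + 1) + (2 * x + 1) * f (x - 1)) / (4 * x)

def M₂ (f : K → K) (x : K) : K :=
  ((x ^ 2 + (x - 1) ^ 2) * f (x + 1) - ((x + 1) ^ 2 + x ^ 2) * f (x - 1)) / (4 * x)

variable [CharZero K] {x : K}

theorem M₁_pow_two_mul (hx : x ≠ 0) (n : ℕ) :
    M₁ (· ^ (2 * n)) x = (evenPart K n).eval (x ^ 2) - (oddPart K n).eval (x ^ 2) := by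
  rw [M₁, div_eq_iff (mul_ne_zero (by norm_num) hx), add_one_pow_two_mul, sub_one_pow_two_mul]
  ring

theorem M₂_pow_two_mul (hx : x ≠ 0) (n : ℕ) :
    M₂ (· ^ (2 * n)) x
      = (2 * x ^ 2 + 1) * (oddPart K n).eval (x ^ 2) - (evenPart K n).eval (x ^ 2) := by
  rw [M₂, div_eq_iff (mul_ne_zero (by norm_num) hx), add_one_pow_two_mul, sub_one_pow_two_mul]
  ring

end Operators

end QuadraticGrid

open QuadraticGrid

/-- On the quadratic grid λ_x = x², the operators M₁ and M₂
stabilize the space of polynomials of degree n in λ_x: on f(x) = x^{2n},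
M₁f = x^{2n} + lower and M₂f = (2n−1)x^{2n} + lower (in x²). -/
theorem stmt4 (n : ℕ) (f : ℂ → ℂ) (hf : ∀ x : ℂ, f x = x ^ (2 * n)) :
    ∃ r₁ r₂ : Polynomial ℂ, r₁.degree < (n : WithBot ℕ) ∧ r₂.degree < (n : WithBot ℕ) ∧
      ∀ x : ℂ, x ≠ 0 →
        ((2 * x - 1) * f (x + 1) + (2 * x + 1) * f (x - 1)) / (4 * x)
            = x ^ (2 * n) + r₁.eval (x ^ 2) ∧
        ((x ^ 2 + (x - 1) ^ 2) * f (x + 1) - ((x + 1) ^ 2 + x ^ 2) * f (x - 1)) / (4 * x)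
            = (2 * (n : ℂ) - 1) * x ^ (2 * n) + r₂.eval (x ^ 2) := by
  obtain rfl : f = (· ^ (2 * n)) := funext hf
  obtain ⟨hE, hO⟩ := evenPart_sub_X_pow_mem_degreeLT_and_oddPart_mem_degreeLT (R := ℂ) n
  have hXO := X_mul_oddPart_sub_mem_degreeLT (R := ℂ) n
  refine ⟨evenPart ℂ n - X ^ n - oddPart ℂ n,
    2 • (X * oddPart ℂ n - n • X ^ n) + oddPart ℂ n - (evenPart ℂ n - X ^ n),
    mem_degreeLT.1 (sub_mem hE hO),
    mem_degreeLT.1 (sub_mem (add_mem (nsmul_mem hXO 2) hO) hE), fun x hx => ⟨?_, ?_⟩⟩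
  · change M₁ (· ^ (2 * n)) x = _
    rw [M₁_pow_two_mul hx]
    simp only [eval_sub, eval_pow, eval_X]
    ring
  · change M₂ (· ^ (2 * n)) x = _
    rw [M₂_pow_two_mul hx]
    simp only [eval_add, eval_sub, eval_mul, eval_pow, eval_X, nsmul_eq_mul, eval_natCast,
      Nat.cast_ofNat, eval_ofNat]
    ring
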